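/- Let φ: A* → A* be non-erasing with alph(φ^n(a)) = alph(φ(a)) for every a ∈ A and n ≥ 1, let A' be a leaf of the tree of invariant subalphabets of φ, let g ∈ A' be an unbounded letter, and let G' = (A', φ|_{A'}, g). If G' is not pushy, then the language L_{G'} is uniformly recurrent. -/

import Mathlib

/-- The extension of the morphism given by `φ` on letters to a morphism on words. -/
def extM {A B : Type*} (φ : A → List B) (w : List A) : List B := w.flatMap φ

/-- The `k`-th power `u^k` of a word `u`. -/
def wpow {A : Type*} (u : List A) (k : ℕ) : List A := (List.replicate k u).flatten

/-- A word `v` is primitive if `v = u^k` implies `k = 1`. -/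
def Primitive {A : Type*} (v : List A) : Prop :=
  v ≠ [] ∧ ∀ (u : List A) (k : ℕ), v = wpow u k → k = 1

/-- The language of the D0L-system `(A, φ, w)`: all factors of the words `φ^n(w)`. -/
def LangD0L {A : Type*} (φ : A → List A) (w : List A) : Set (List A) :=
  {v | ∃ n : ℕ, v <:+: (extM φ)^[n] w}

/-- `fact(Ψ(L))`: all factors of `Ψ`-images of elements of `L`. -/
def factImg {A B : Type*} (Ψ : A → List B) (L : Set (List A)) : Set (List B) :=
  {v | ∃ u ∈ L, v <:+: extM Ψ u}

/-- The language of the HD0L-system `(A, φ, w, Ψ)`. -/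
def LangHD0L {A B : Type*} (φ : A → List A) (w : List A) (Ψ : A → List B) : Set (List B) :=
  factImg Ψ (LangD0L φ w)

/-- A morphism is non-erasing if no letter is mapped to the empty word. -/
def NonErasing {A B : Type*} (φ : A → List B) : Prop := ∀ a, φ a ≠ []

/-- A letter `b` is bounded (w.r.t. `φ`) if the lengths `|φ^n(b)|` are bounded. -/
def BddLetter {A : Type*} (φ : A → List A) (b : A) : Prop :=
  ∃ C : ℕ, ∀ n : ℕ, ((extM φ)^[n] [b]).length ≤ C

/-- The set of letters occurring in a word. -/
def alph {A : Type*} (u : List A) : Set A := {a | a ∈ u}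

/-- `alph(φ(S))` for a set of letters `S`: letters occurring in `φ(b)` for some `b ∈ S`. -/
def alphIm {A : Type*} (φ : A → List A) (S : Set A) : Set A := ⋃ b ∈ S, alph (φ b)

/-- A D0L-system is pushy if its language contains infinitely many words over bounded letters. -/
def Pushy {A : Type*} (φ : A → List A) (w : List A) : Prop :=
  {v ∈ LangD0L φ w | ∀ a ∈ v, BddLetter φ a}.Infinite

/-- A factorial language `L` is uniformly recurrent: for every `n` there is `K` such that
every element of `L` of length `K` contains every element of `L` of length `n` as a factor. -/
def UnifRec {A : Type*} (L : Set (List A)) : Prop :=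
  ∀ n : ℕ, ∃ K : ℕ, ∀ u ∈ L, u.length = K → ∀ v ∈ L, v.length = n → v <:+: u

/-- Vertices of the tree of invariant subalphabets of `φ`: nonempty sets `S` with
`alph(φ(S)) = S` containing an unbounded letter `a` with `alph(φ(a)) = S`. -/
def IsVertex {A : Type*} (φ : A → List A) (S : Set A) : Prop :=
  S.Nonempty ∧ alphIm φ S = S ∧ ∃ a ∈ S, ¬ BddLetter φ a ∧ alph (φ a) = S

/-- Leaves of the tree of invariant subalphabets: minimal vertices w.r.t. inclusion. -/
def IsLeaf {A : Type*} (φ : A → List A) (S : Set A) : Prop :=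
  IsVertex φ S ∧ ∀ T, IsVertex φ T → T ⊆ S → T = S

/-- Two words are conjugate: `u = xy` and `v = yx`. -/
def Conj {A : Type*} (u v : List A) : Prop := ∃ x y : List A, u = x ++ y ∧ v = y ++ x

/-- The prefix of length `n` of an infinite word. -/
def prefW {A : Type*} (w : ℕ → A) (n : ℕ) : List A := (List.range n).map w

/-!
Fix `n`. By minimality of the leaf `A'`, every unbounded letter `a ∈ A'` has `alph(φ(a)) = A'`,
so by Assumption ∗ the letter `g` occurs in every `φʲ(a)` with `j ≥ 1`; hence a single level `m`
makes every word of length `n` of the language a factor of `φᵐ(a)` for all such `a`. A long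
factor of `φᴹ(g) = φᵐ(φᴹ⁻ᵐ(g))` contains `φᵐ(z)` for a long factor `z` of `φᴹ⁻ᵐ(g)`; as the
system is not pushy, `z` contains an unbounded letter, which lies in `A'` since `A'` is invariant.
-/

section Morphism

variable {A B : Type*}

theorem extM_append (φ : A → List B) (x y : List A) :
    extM φ (x ++ y) = extM φ x ++ extM φ y :=
  List.flatMap_append ..

theorem extM_singleton (φ : A → List B) (a : A) : extM φ [a] = φ a := by
  simp [extM]

theorem iterate_extM_append (φ : A → List A) (m : ℕ) (x y : List A) :
    (extM φ)^[m] (x ++ y) = (extM φ)^[m] x ++ (extM φ)^[m] y := by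
  induction m generalizing x y with
  | zero => rfl
  | succ m ih => rw [Function.iterate_succ_apply, extM_append, ih]; rfl

theorem iterate_extM_nil (φ : A → List A) (m : ℕ) : (extM φ)^[m] [] = [] :=
  Function.iterate_fixed rfl m

theorem iterate_extM_eq_flatMap (φ : A → List A) (m : ℕ) (w : List A) :
    (extM φ)^[m] w = w.flatMap fun a => (extM φ)^[m] [a] := by
  induction w with
  | nil => exact iterate_extM_nil φ m
  | cons a w ih => rw [← List.singleton_append, iterate_extM_append, ih]; rfl

theorem List.IsInfix.iterate_extM (φ : A → List A) (m : ℕ) {u w : List A} (h : u <:+: w) :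
    (extM φ)^[m] u <:+: (extM φ)^[m] w := by
  obtain ⟨s, t, rfl⟩ := h
  rw [iterate_extM_append, iterate_extM_append]
  exact ⟨_, _, rfl⟩

theorem length_flatMap_le (ψ : A → List B) {c : ℕ} (hc : ∀ a, (ψ a).length ≤ c) (w : List A) :
    (w.flatMap ψ).length ≤ c * w.length := by
  induction w with
  | nil => simp
  | cons a w ih =>
    have := hc a
    simp only [List.flatMap_cons, List.length_append, List.length_cons, Nat.mul_succ]
    omega

theorem length_iterate_extM_le (φ : A → List A) {c : ℕ} (hc : ∀ a, (φ a).length ≤ c) (m : ℕ)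
    (w : List A) : ((extM φ)^[m] w).length ≤ c ^ m * w.length := by
  induction m generalizing w with
  | zero => simp
  | succ m ih =>
    calc ((extM φ)^[m] (extM φ w)).length ≤ c ^ m * (extM φ w).length := ih _
      _ ≤ c ^ m * (c * w.length) := Nat.mul_le_mul_left _ (length_flatMap_le φ hc w)
      _ = c ^ (m + 1) * w.length := by ring

theorem exists_pos_length_iterate_extM_singleton_le [Finite A] (φ : A → List A) :
    ∃ c, 0 < c ∧ ∀ m a, ((extM φ)^[m] [a]).length ≤ c ^ m := by
  have := Fintype.ofFinite A
  have hc (a : A) : (φ a).length ≤ Finset.univ.sup fun a => (φ a).length :=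
    Finset.le_sup (f := fun a => (φ a).length) (Finset.mem_univ a)
  exact ⟨_, Nat.succ_pos _, fun m a => by
    simpa using length_iterate_extM_le φ (fun a => (hc a).trans (Nat.le_succ _)) m [a]⟩

theorem List.IsPrefix.exists_flatMap_append (ψ : A → List B) {c : ℕ}
    (hc : ∀ a, (ψ a).length ≤ c) {w : List A} {u : List B} (hu : u <+: w.flatMap ψ) :
    ∃ z s, z <+: w ∧ u = z.flatMap ψ ++ s ∧ s.length ≤ c := by
  induction w generalizing u with
  | nil => exact ⟨[], [], List.nil_prefix, by simpa using hu, by simp⟩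
  | cons b w ih =>
    obtain ⟨t, ht⟩ := hu
    rw [List.flatMap_cons] at ht
    rcases List.append_eq_append_iff.mp ht with ⟨q, hq, -⟩ | ⟨q, hq, hqt⟩
    · refine ⟨[], u, List.nil_prefix, by simp, ?_⟩
      have := congrArg List.length hq
      simp only [List.length_append] at this
      exact (by omega : u.length ≤ (ψ b).length).trans (hc b)
    · obtain ⟨z, s, hz, rfl, hs⟩ := ih ⟨t, hqt.symm⟩
      exact ⟨b :: z, s, List.cons_prefix_cons.mpr ⟨rfl, hz⟩, by simp [hq], hs⟩

theorem List.IsInfix.exists_flatMap_append (ψ : A → List B) {c : ℕ}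
    (hc : ∀ a, (ψ a).length ≤ c) {w : List A} {u : List B} (hu : u <:+: w.flatMap ψ) :
    ∃ z p s, z <:+: w ∧ u = p ++ z.flatMap ψ ++ s ∧ p.length ≤ c ∧ s.length ≤ c := by
  induction w generalizing u with
  | nil => exact ⟨[], [], [], List.nil_infix, by simpa using hu, by simp, by simp⟩
  | cons b w ih =>
    obtain ⟨r, t, ht⟩ := hu
    rw [List.flatMap_cons, List.append_assoc] at ht
    rcases List.append_eq_append_iff.mp ht with ⟨q, hq, hqt⟩ | ⟨q, hq, hqt⟩
    · rcases List.append_eq_append_iff.mp hqt with ⟨q', hq', -⟩ | ⟨q', rfl, hq't⟩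
      · refine ⟨[], u, [], List.nil_infix, by simp, ?_, by simp⟩
        have h₁ := congrArg List.length hq
        have h₂ := congrArg List.length hq'
        have := hc b
        simp only [List.length_append] at h₁ h₂
        omega
      · obtain ⟨z, s, hz, rfl, hs⟩ := List.IsPrefix.exists_flatMap_append ψ hc ⟨t, hq't.symm⟩
        refine ⟨z, q, s, hz.isInfix.trans (List.infix_cons (List.infix_refl _)), by simp, ?_, hs⟩
        have h₁ := congrArg List.length hq
        have := hc b
        simp only [List.length_append] at h₁
        omega
    · obtain ⟨z, p, s, hz, hu, hp, hs⟩ := ih ⟨q, t, by rw [List.append_assoc, hqt]⟩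
      exact ⟨z, p, s, List.infix_cons hz, hu, hp, hs⟩

theorem exists_infix_flatMap_infix_of_lt_length (ψ : A → List B) {c D : ℕ}
    (hc : ∀ a, (ψ a).length ≤ c) {w : List A} {u : List B} (hu : u <:+: w.flatMap ψ)
    (hlen : (D + 2) * c < u.length) :
    ∃ z, z <:+: w ∧ D < z.length ∧ z.flatMap ψ <:+: u := by
  obtain ⟨z, p, s, hz, rfl, hp, hs⟩ := hu.exists_flatMap_append ψ hc
  refine ⟨z, hz, ?_, ⟨p, s, rfl⟩⟩
  have hzψ := length_flatMap_le ψ hc z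
  simp only [List.length_append] at hlen
  have : D * c < z.length * c := by nlinarith
  exact Nat.lt_of_mul_lt_mul_right this

end Morphism

section Alphabet

variable {A : Type*} {φ : A → List A}

theorem mem_alphIm {S : Set A} {x : A} : x ∈ alphIm φ S ↔ ∃ b ∈ S, x ∈ φ b := by
  simp [alphIm, alph]

theorem alph_extM (u : List A) : alph (extM φ u) = alphIm φ (alph u) := by
  ext x
  simp [alph, mem_alphIm, extM]

theorem alph_iterate_extM_subset {S : Set A} (hS : alphIm φ S ⊆ S) {w : List A}
    (hw : alph w ⊆ S) (n : ℕ) : alph ((extM φ)^[n] w) ⊆ S := by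
  induction n with
  | zero => exact hw
  | succ n ih =>
    rw [Function.iterate_succ_apply', alph_extM]
    intro x hx
    obtain ⟨b, hb, hxb⟩ := mem_alphIm.mp hx
    exact hS (mem_alphIm.mpr ⟨b, ih hb, hxb⟩)

end Alphabet

section Bounded

variable {A : Type*} {φ : A → List A}

theorem exists_length_iterate_extM_le_of_forall_bddLetter {u : List A}
    (hu : ∀ a ∈ u, BddLetter φ a) : ∃ C, ∀ n, ((extM φ)^[n] u).length ≤ C := by
  induction u with
  | nil => exact ⟨0, fun n => by simp [iterate_extM_nil]⟩
  | cons a u ih =>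
    obtain ⟨Ca, hCa⟩ := hu a List.mem_cons_self
    obtain ⟨Cu, hCu⟩ := ih fun b hb => hu b (List.mem_cons_of_mem a hb)
    refine ⟨Ca + Cu, fun n => ?_⟩
    rw [← List.singleton_append, iterate_extM_append, List.length_append]
    exact Nat.add_le_add (hCa n) (hCu n)

theorem exists_mem_not_bddLetter {a : A} (ha : ¬ BddLetter φ a) :
    ∃ b ∈ φ a, ¬ BddLetter φ b := by
  by_contra! h
  obtain ⟨C, hC⟩ := exists_length_iterate_extM_le_of_forall_bddLetter h
  refine ha ⟨C + 1, fun n => ?_⟩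
  cases n with
  | zero => simp
  | succ n =>
    rw [Function.iterate_succ_apply, extM_singleton]
    exact (hC n).trans (Nat.le_succ C)

/-- Take `S = alph(φ(b))` with `b` unbounded, `alph(φ(b)) ⊆ alph(φ(a))` and `|alph(φ(b))|`
minimal; an unbounded letter of `φ(b)` then has the same alphabet by minimality. -/
theorem exists_isVertex_subset_alph [Finite A]
    (hstar : ∀ (a : A) (n : ℕ), 1 ≤ n → alph ((extM φ)^[n] [a]) = alph (φ a))
    {a : A} (ha : ¬ BddLetter φ a) : ∃ S, IsVertex φ S ∧ S ⊆ alph (φ a) := by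
  set T : Set A := {b | ¬ BddLetter φ b ∧ alph (φ b) ⊆ alph (φ a)}
  obtain ⟨b, ⟨hbu, hba⟩, hbmin⟩ :=
    T.exists_min_image (fun b => (alph (φ b)).ncard) T.toFinite ⟨a, ha, subset_rfl⟩
  have hinv : alphIm φ (alph (φ b)) = alph (φ b) := by
    simpa [← alph_extM, ← extM_singleton φ b] using hstar b 2 one_le_two
  obtain ⟨b', hb'b, hb'u⟩ := exists_mem_not_bddLetter hbu
  have hsub : alph (φ b') ⊆ alph (φ b) := fun x hx => hinv ▸ mem_alphIm.mpr ⟨b', hb'b, hx⟩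
  have heq : alph (φ b') = alph (φ b) :=
    Set.eq_of_subset_of_ncard_le hsub (hbmin b' ⟨hb'u, hsub.trans hba⟩) (Set.toFinite _)
  exact ⟨_, ⟨⟨b', hb'b⟩, hinv, b', hb'b, hb'u, heq⟩, hba⟩

theorem IsLeaf.alph_eq_of_not_bddLetter [Finite A]
    (hstar : ∀ (a : A) (n : ℕ), 1 ≤ n → alph ((extM φ)^[n] [a]) = alph (φ a))
    {S : Set A} (hS : IsLeaf φ S) {a : A} (haS : a ∈ S) (ha : ¬ BddLetter φ a) :
    alph (φ a) = S := by
  have hsub : alph (φ a) ⊆ S := fun x hx => hS.1.2.1 ▸ mem_alphIm.mpr ⟨a, haS, hx⟩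
  obtain ⟨T, hT, hTa⟩ := exists_isVertex_subset_alph hstar ha
  exact hsub.antisymm (hS.2 T hT (hTa.trans hsub) ▸ hTa)

end Bounded

section Language

variable {A : Type*} {φ : A → List A}

theorem exists_infix_iterate_of_finite {g : A} {F : Set (List A)} (hF : F.Finite)
    (hFL : F ⊆ LangD0L φ [g]) :
    ∃ m, ∀ a : A, (∀ j, 1 ≤ j → g ∈ (extM φ)^[j] [a]) → ∀ v ∈ F, v <:+: (extM φ)^[m] [a] := by
  have hFL' : ∀ v ∈ F, ∃ N, v <:+: (extM φ)^[N] [g] := hFL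
  choose! N hN using hFL'
  obtain ⟨M, hM⟩ := (hF.image N).bddAbove
  refine ⟨M + 1, fun a ha v hv => ?_⟩
  have hNv : N v ≤ M := hM ⟨v, hv, rfl⟩
  have hga : [g] <:+: (extM φ)^[M + 1 - N v] [a] :=
    (List.singleton_infix_iff _ _).mpr (ha _ (by omega))
  rw [show M + 1 = N v + (M + 1 - N v) by omega, Function.iterate_add_apply]
  exact (hN v hv).trans (hga.iterate_extM φ (N v))

theorem exists_not_bddLetter_mem_of_not_pushy {w : List A} (h : ¬ Pushy φ w) :
    ∃ D, ∀ z ∈ LangD0L φ w, D < z.length → ∃ a ∈ z, ¬ BddLetter φ a := by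
  obtain ⟨D, hD⟩ := ((Set.not_infinite.mp h).image List.length).bddAbove
  refine ⟨D, fun z hz hzD => ?_⟩
  by_contra! hb
  exact absurd (hD ⟨z, ⟨hz, hb⟩, rfl⟩) (by omega)

end Language

theorem stmt13_general {A : Type*} [Fintype A] (φ : A → List A)
    (hstar : ∀ (a : A) (n : ℕ), 1 ≤ n → alph ((extM φ)^[n] [a]) = alph (φ a))
    (A' : Set A) (hA' : IsLeaf φ A')
    (g : A) (hg : g ∈ A')
    (hnp : ¬ Pushy φ [g]) :
    UnifRec (LangD0L φ [g]) := by
  intro n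
  obtain ⟨m, hm⟩ := exists_infix_iterate_of_finite (F := {v ∈ LangD0L φ [g] | v.length = n})
    ((List.finite_length_eq A n).subset fun v hv => hv.2) fun v hv => hv.1
  obtain ⟨D, hD⟩ := exists_not_bddLetter_mem_of_not_pushy hnp
  obtain ⟨c, hc, hlen⟩ := exists_pos_length_iterate_extM_singleton_le φ
  set ψ : A → List A := fun a => (extM φ)^[m] [a]
  refine ⟨(D + 2) * c ^ m + 1, fun u ⟨M, huM⟩ hu v hv hvn => ?_⟩
  have hmM : m ≤ M := by
    by_contra! hMm
    have := huM.length_le.trans ((hlen M g).trans (Nat.pow_le_pow_right hc hMm.le))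
    nlinarith
  obtain ⟨k, rfl⟩ := Nat.exists_eq_add_of_le hmM
  rw [Function.iterate_add_apply, iterate_extM_eq_flatMap] at huM
  obtain ⟨z, hzk, hzD, hzu⟩ :=
    exists_infix_flatMap_infix_of_lt_length (D := D) ψ (hlen m) huM (by omega)
  obtain ⟨a, haz, ha⟩ := hD z ⟨k, hzk⟩ hzD
  have haA : a ∈ A' :=
    alph_iterate_extM_subset hA'.1.2.1.le (by simpa [alph] using hg) k (hzk.subset haz)
  have hga (j : ℕ) (hj : 1 ≤ j) : g ∈ (extM φ)^[j] [a] :=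
    show g ∈ alph _ by rwa [hstar a j hj, hA'.alph_eq_of_not_bddLetter hstar haA ha]
  exact (hm a hga v ⟨hv, hvn⟩).trans ((List.infix_flatMap_of_mem haz ψ).trans hzu)

/-- Under Assumption ∗, for a leaf `A'`, an unbounded `g ∈ A'` and
`G' = (A', φ|_{A'}, g)` not pushy, the language `L_{G'}` is uniformly recurrent. -/
theorem stmt13 {A : Type*} [Fintype A] (φ : A → List A) (hφ : NonErasing φ)
    (hstar : ∀ (a : A) (n : ℕ), 1 ≤ n → alph ((extM φ)^[n] [a]) = alph (φ a))
    (A' : Set A) (hA' : IsLeaf φ A')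
    (g : A) (hg : g ∈ A') (hgu : ¬ BddLetter φ g)
    (hnp : ¬ Pushy φ [g]) :
    UnifRec (LangD0L φ [g]) :=
  stmt13_general φ hstar A' hA' g hg hnp
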